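/- With the synchronized coupling operator L^{γ,γ̃} and f(i,j) = |i−j|^p for a fixed real p > 1, if |a(i,γ)−a(j,γ̃)| + |b(i,γ)−b(j,γ̃)| ≤ β·(|i−j| + W) for all i,j (with β ≥ 0 and W ≥ 0 fixed), then L^{γ,γ̃}f(i,j) ≤ p·2^(p−1)·β·(max(1,|i−j|))^(p−1)·(|i−j| + W) for all i, j ∈ ℤ₊. -/
import Mathlib


/-- The synchronized coupling operator for two birth-death rate pairs
`(a, b)` (rates with measure argument `γ`) and `(a', b')` (rates with measure
argument `γ̃`), acting on functions `f : ℤ₊ × ℤ₊ → ℝ`. -/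
noncomputable def couplingOp (a b a' b' : ℕ → ℝ) (f : ℕ → ℕ → ℝ) (i j : ℕ) : ℝ :=
    min (b i) (b' j) * (f (i+1) (j+1) - f i j)
  + min (a i) (a' j) * (f (i-1) (j-1) - f i j)
  + max (b i - b' j) 0 * (f (i+1) j - f i j)
  + max (-(b i - b' j)) 0 * (f i (j+1) - f i j)
  + max (a i - a' j) 0 * (f (i-1) j - f i j)
  + max (-(a i - a' j)) 0 * (f i (j-1) - f i j)

private lemma rpow_mvt_aux (p : ℝ) (hp : 1 ≤ p) {t s : ℝ} (ht : 0 ≤ t) (hts : t ≤ s) :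
    |s ^ p - t ^ p| ≤ p * s ^ (p - 1) * |s - t| := by
  have hs : 0 ≤ s := ht.trans hts
  have := (convex_Icc t s).norm_image_sub_le_of_norm_hasDerivWithin_le
    (f := fun x : ℝ => x ^ p) (f' := fun x : ℝ => p * x ^ (p - 1)) (C := p * s ^ (p - 1))
    (fun x hx => (Real.hasDerivAt_rpow_const (Or.inr hp)).hasDerivWithinAt)
    (fun x hx => by
      have hx0 : 0 ≤ x := ht.trans hx.1
      rw [Real.norm_eq_abs, abs_of_nonneg (mul_nonneg (by linarith) (Real.rpow_nonneg hx0 _))]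
      exact mul_le_mul_of_nonneg_left
        (Real.rpow_le_rpow hx0 hx.2 (by linarith)) (by linarith))
    (Set.right_mem_Icc.2 hts) (Set.left_mem_Icc.2 hts)
  rw [abs_sub_comm, abs_sub_comm s t]
  simpa [Real.norm_eq_abs] using this

private lemma key_incr (p : ℝ) (hp : 1 ≤ p) (x y : ℝ) (hxy : |y - x| ≤ 1) :
    ‖|y| ^ p - |x| ^ p‖ ≤ p * 2 ^ (p - 1) * (max 1 |x|) ^ (p - 1) := by
  set t := min |y| |x| with htdef
  set s := max |y| |x| with hsdef
  have ht : 0 ≤ t := le_min (abs_nonneg _) (abs_nonneg _)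
  have hts : t ≤ s := min_le_max
  have hst1 : |s - t| ≤ 1 := by
    rw [abs_of_nonneg (by linarith)]
    rcases le_total |y| |x| with h | h
    · simp only [htdef, hsdef, min_eq_left h, max_eq_right h]
      have := abs_sub_abs_le_abs_sub x y
      rw [abs_sub_comm y x] at hxy
      linarith
    · simp only [htdef, hsdef, min_eq_right h, max_eq_left h]
      have := abs_sub_abs_le_abs_sub y x
      linarith
  have h1 : ‖|y| ^ p - |x| ^ p‖ = |s ^ p - t ^ p| := by
    rcases le_total |y| |x| with h | h
    · rw [abs_sub_comm]; simp [htdef, hsdef, min_eq_left h, max_eq_right h]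
    · simp [htdef, hsdef, min_eq_right h, max_eq_left h]
  have hs2 : s ≤ 2 * max 1 |x| := by
    have h1x : |y| ≤ |x| + 1 := by
      have := abs_sub_abs_le_abs_sub y x; linarith
    have : s ≤ |x| + 1 := max_le h1x (by linarith [abs_nonneg x])
    have := le_max_left (1:ℝ) |x|; have := le_max_right (1:ℝ) |x|
    linarith
  have hM : (0:ℝ) ≤ max 1 |x| := le_trans zero_le_one (le_max_left _ _)
  have hmul : ((2:ℝ) * max 1 |x|) ^ (p-1) = 2 ^ (p-1) * (max 1 |x|) ^ (p-1) :=
    Real.mul_rpow (by norm_num) hM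
  calc ‖|y| ^ p - |x| ^ p‖ = |s ^ p - t ^ p| := h1
    _ ≤ p * s ^ (p - 1) * |s - t| := rpow_mvt_aux p hp ht hts
    _ ≤ p * (2 * max 1 |x|) ^ (p - 1) * 1 := by
        apply mul_le_mul _ hst1 (abs_nonneg _)
          (mul_nonneg (by linarith) (Real.rpow_nonneg (by linarith) _))
        exact mul_le_mul_of_nonneg_left
          (Real.rpow_le_rpow (ht.trans hts) hs2 (by linarith)) (by linarith)
    _ = p * 2 ^ (p - 1) * (max 1 |x|) ^ (p - 1) := by rw [hmul]; ring

theorem stmt_10 (a b a' b' : ℕ → ℝ)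
    (ha : ∀ i, 0 ≤ a i) (hb : ∀ i, 0 ≤ b i) (ha' : ∀ i, 0 ≤ a' i) (hb' : ∀ i, 0 ≤ b' i)
    (ha0 : a 0 = 0) (ha'0 : a' 0 = 0) (p : ℝ) (hp : 1 < p)
    (β W : ℝ) (hβ : 0 ≤ β) (hW : 0 ≤ W)
    (hlip : ∀ i j : ℕ, |a i - a' j| + |b i - b' j| ≤ β * (|(i : ℝ) - j| + W)) :
    ∀ i j : ℕ,
      couplingOp a b a' b' (fun i j => |(i : ℝ) - j| ^ p) i j
        ≤ p * 2 ^ (p - 1) * β * (max 1 |(i : ℝ) - j|) ^ (p - 1) * (|(i : ℝ) - j| + W) := by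
  intro i j
  have hp1 : 1 ≤ p := hp.le
  set f : ℕ → ℕ → ℝ := fun i j => |(i : ℝ) - j| ^ p with hf
  set x : ℝ := (i : ℝ) - j with hx
  set C : ℝ := p * 2 ^ (p - 1) * (max 1 |x|) ^ (p - 1) with hC
  have hMnn : (0:ℝ) ≤ max 1 |x| := le_trans zero_le_one (le_max_left _ _)
  have hCnn : 0 ≤ C :=
    mul_nonneg (mul_nonneg (by linarith) (Real.rpow_nonneg (by norm_num) _))
      (Real.rpow_nonneg hMnn _)
  -- the two synchronized terms vanish
  have e1 : f (i+1) (j+1) - f i j = 0 := by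
    have : ((i+1 : ℕ) : ℝ) - ((j+1 : ℕ) : ℝ) = (i : ℝ) - j := by push_cast; ring
    simp [hf, this]
  have e2 : min (a i) (a' j) * (f (i-1) (j-1) - f i j) = 0 := by
    rcases i with _ | i
    · rw [ha0, min_eq_left (ha' j), zero_mul]
    · rcases j with _ | j
      · rw [ha'0, min_eq_right (ha _), zero_mul]
      · have h0 : f (i+1-1) (j+1-1) - f (i+1) (j+1) = 0 := by
          simp only [Nat.add_sub_cancel, hf]
          have hc : ((i:ℝ)) - (j:ℝ) = ((i+1 : ℕ):ℝ) - ((j+1 : ℕ):ℝ) := by push_cast; ring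
          rw [hc, sub_self]
        rw [h0, mul_zero]
  -- increment bound
  have keyb : ∀ k l : ℕ, |((k : ℝ) - l) - x| ≤ 1 → f k l - f i j ≤ C := by
    intro k l h
    have h2 := key_incr p hp1 x ((k : ℝ) - l) h
    rw [Real.norm_eq_abs] at h2
    have := abs_le.1 h2
    simpa [hf, hC] using this.2
  have h3 : f (i+1) j - f i j ≤ C := by
    apply keyb; push_cast
    rw [hx]; norm_num
  have h4 : f i (j+1) - f i j ≤ C := by
    apply keyb; push_cast
    rw [hx]
    have : (i : ℝ) - (j + 1) - ((i : ℝ) - j) = -1 := by ring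
    rw [this]; norm_num
  have h5 : f (i-1) j - f i j ≤ C := by
    rcases i with _ | i
    · simpa using hCnn
    · apply keyb
      simp only [Nat.add_sub_cancel]
      rw [hx]
      push_cast
      have : (i : ℝ) - j - ((i : ℝ) + 1 - j) = -1 := by ring
      rw [this]; norm_num
  have h6 : f i (j-1) - f i j ≤ C := by
    rcases j with _ | j
    · simpa using hCnn
    · apply keyb
      simp only [Nat.add_sub_cancel]
      rw [hx]
      push_cast
      have : (i : ℝ) - j - ((i : ℝ) - ((j : ℝ) + 1)) = 1 := by ring
      rw [this]; norm_num
  have expand : couplingOp a b a' b' f i j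
      = max (b i - b' j) 0 * (f (i+1) j - f i j)
      + max (-(b i - b' j)) 0 * (f i (j+1) - f i j)
      + max (a i - a' j) 0 * (f (i-1) j - f i j)
      + max (-(a i - a' j)) 0 * (f i (j-1) - f i j) := by
    unfold couplingOp
    rw [e1, e2, mul_zero]
    ring
  have habs : ∀ c : ℝ, max c 0 + max (-c) 0 = |c| := fun c => by
    rcases le_total 0 c with h | h
    · rw [max_eq_left h, max_eq_right (by linarith), abs_of_nonneg h, add_zero]
    · rw [max_eq_right h, max_eq_left (by linarith), abs_of_nonpos h, zero_add]
  have hsum : couplingOp a b a' b' f i j ≤ (|a i - a' j| + |b i - b' j|) * C := by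
    rw [expand]
    have t3 := mul_le_mul_of_nonneg_left h3 (le_max_right (b i - b' j) 0)
    have t4 := mul_le_mul_of_nonneg_left h4 (le_max_right (-(b i - b' j)) 0)
    have t5 := mul_le_mul_of_nonneg_left h5 (le_max_right (a i - a' j) 0)
    have t6 := mul_le_mul_of_nonneg_left h6 (le_max_right (-(a i - a' j)) 0)
    have e3 := habs (b i - b' j)
    have e4 := habs (a i - a' j)
    nlinarith [t3, t4, t5, t6]
  calc couplingOp a b a' b' f i j ≤ (|a i - a' j| + |b i - b' j|) * C := hsum
    _ ≤ (β * (|x| + W)) * C := mul_le_mul_of_nonneg_right (hlip i j) hCnn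
    _ = p * 2 ^ (p - 1) * β * (max 1 |x|) ^ (p - 1) * (|x| + W) := by rw [hC]; ring
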